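/- arXiv:2310.12214 — 2 statements merged into one kernel-verified Lean document; each statement's English description precedes it below -/
import Mathlib

section
/- If a randomized mechanism M outputs y on input x with probability proportional to exp(ε·u(x,y)/(2Δu)), where Δu = max_{x,x',y} |u(x,y) - u(x',y)|, then for all inputs x, x' and all outputs y, Pr[M(x)=y]/Pr[M(x')=y] ≤ e^ε; i.e., the exponential mechanism satisfies ε-differential privacy. -/
open Real Finset

theorem exponential_mechanism_dp
    {X Y : Type*} [Fintype X] [Fintype Y] [Nonempty X] [Nonempty Y]
    (u : X → Y → ℝ) (ε Δu : ℝ) (hε : 0 ≤ ε) (hΔ : 0 < Δu)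
    (hsens : ∀ x x' : X, ∀ y : Y, |u x y - u x' y| ≤ Δu)
    (P : X → Y → ℝ)
    (hP : ∀ x y, P x y =
      Real.exp (ε * u x y / (2 * Δu)) / ∑ y' : Y, Real.exp (ε * u x y' / (2 * Δu))) :
    ∀ x x' : X, ∀ y : Y, P x y ≤ Real.exp ε * P x' y := by
  intro x x' y
  set a : X → Y → ℝ := fun x y => ε * u x y / (2 * Δu) with ha
  set S : X → ℝ := fun x => ∑ y' : Y, Real.exp (a x y') with hS
  have hSpos : ∀ z : X, 0 < S z := fun z =>
    Finset.sum_pos (fun i _ => Real.exp_pos _) Finset.univ_nonempty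
  have key : ∀ z z' : X, ∀ w : Y, Real.exp (a z w) ≤ Real.exp (ε / 2) * Real.exp (a z' w) := by
    intro z z' w
    rw [← Real.exp_add, Real.exp_le_exp]
    have h1 : a z w - a z' w ≤ ε / 2 := by
      have := hsens z z' w
      have h2 : u z w - u z' w ≤ Δu := (abs_le.mp this).2
      have : a z w - a z' w = ε * (u z w - u z' w) / (2 * Δu) := by
        simp only [ha]; ring
      rw [this]
      rw [div_le_iff₀ (by positivity)]
      calc ε * (u z w - u z' w) ≤ ε * Δu := by
            exact mul_le_mul_of_nonneg_left h2 hε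
        _ = ε / 2 * (2 * Δu) := by ring
    linarith
  have hnum : Real.exp (a x y) ≤ Real.exp (ε / 2) * Real.exp (a x' y) := key x x' y
  have hden : S x' ≤ Real.exp (ε / 2) * S x := by
    simp only [hS, Finset.mul_sum]
    exact Finset.sum_le_sum fun w _ => key x' x w
  rw [hP, hP]
  show Real.exp (a x y) / S x ≤ Real.exp ε * (Real.exp (a x' y) / S x')
  rw [← mul_div_assoc, div_le_div_iff₀ (hSpos x) (hSpos x')]
  calc Real.exp (a x y) * S x' ≤ (Real.exp (ε / 2) * Real.exp (a x' y)) * (Real.exp (ε / 2) * S x) :=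
        mul_le_mul hnum hden (le_of_lt (hSpos x')) (by positivity)
    _ = Real.exp ε * Real.exp (a x' y) * S x := by
        rw [show Real.exp ε = Real.exp (ε/2) * Real.exp (ε/2) by rw [← Real.exp_add]; ring_nf]
        ring
end

section
/- The Laplace mechanism M(x) = f(x) + Y, where Y ~ Lap(0, Δf/ε), satisfies ε-differential privacy: for any measurable set S ⊆ ℝ and any x, x' with |f(x) − f(x')| ≤ Δf, Pr[M(x) ∈ S] ≤ e^ε · Pr[M(x') ∈ S]. -/
/-!
Translating the Laplace density of scale `b = Δf / ε` by at most `Δf` changes it pointwise by a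
factor of at most `exp (Δf / b) = exp ε`, by the triangle inequality in the exponent. Since `M x` is Lebesgue
measure with the translated density, this pointwise bound between densities integrates to the
bound between the measures of any set.
-/

open MeasureTheory Real
open scoped ENNReal

noncomputable def laplacePDF (b y : ℝ) : ℝ := 1 / (2 * b) * exp (-|y| / b)

lemma laplacePDF_nonneg {b : ℝ} (hb : 0 ≤ b) (y : ℝ) : 0 ≤ laplacePDF b y := by
  unfold laplacePDF; positivity

lemma laplacePDF_le_exp_mul {b : ℝ} (hb : 0 ≤ b) (y y' : ℝ) :
    laplacePDF b y ≤ exp (|y - y'| / b) * laplacePDF b y' := by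
  have hexp : exp (-|y| / b) ≤ exp (|y - y'| / b) * exp (-|y'| / b) := by
    rw [← exp_add, ← add_div, exp_le_exp]
    gcongr
    linarith [abs_sub_abs_le_abs_sub y' y, abs_sub_comm y y']
  unfold laplacePDF
  rw [mul_left_comm]
  gcongr

namespace MeasureTheory.Measure

lemma map_withDensity_const_add {G : Type*} [MeasurableSpace G] [AddCommGroup G]
    [MeasurableAdd G] (μ : Measure G) [μ.IsAddLeftInvariant] {g : G → ℝ≥0∞}
    (hg : Measurable g) (c : G) :
    (μ.withDensity g).map (c + ·) = μ.withDensity fun w => g (w - c) := by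
  ext s hs
  have hshift : Measurable fun w => g (w - c) := by
    simp_rw [sub_eq_add_neg]; exact hg.comp (measurable_add_const (-c))
  rw [map_apply (measurable_const_add c) hs,
    withDensity_apply _ (hs.preimage (measurable_const_add c)), withDensity_apply _ hs,
    ← (measurePreserving_add_left μ c).setLIntegral_comp_preimage hs hshift]
  simp only [add_sub_cancel_left]

lemma withDensity_le_smul_withDensity {α : Type*} [MeasurableSpace α] {μ : Measure α}
    {f g : α → ℝ≥0∞} {C : ℝ≥0∞} (hC : C ≠ ∞) (hfg : ∀ a, f a ≤ C * g a) :
    μ.withDensity f ≤ C • μ.withDensity g := by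
  rw [← withDensity_smul' C g hC]
  exact withDensity_mono (ae_of_all _ hfg)

end MeasureTheory.Measure

theorem laplace_mechanism_dp_general
    {X : Type*} (f : X → ℝ) (ε Δf : ℝ) (hε : 0 < ε) (hΔf : 0 < Δf)
    (lap : Measure ℝ)
    (hlap : lap = volume.withDensity fun y : ℝ =>
      ENNReal.ofReal ((1 / (2 * (Δf / ε))) * Real.exp (-|y| / (Δf / ε))))
    (M : X → Measure ℝ)
    (hM : ∀ x, M x = lap.map fun y => f x + y)
    (x x' : X) (hadj : |f x - f x'| ≤ Δf)
    (S : Set ℝ) :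
    M x S ≤ ENNReal.ofReal (Real.exp ε) * M x' S := by
  have hb : 0 < Δf / ε := div_pos hΔf hε
  have hpdf : Measurable fun y => ENNReal.ofReal (laplacePDF (Δf / ε) y) := by
    unfold laplacePDF; fun_prop
  replace hlap : lap = volume.withDensity fun y => ENNReal.ofReal (laplacePDF (Δf / ε) y) := hlap
  rw [hM, hM, hlap, Measure.map_withDensity_const_add _ hpdf,
    Measure.map_withDensity_const_add _ hpdf]
  refine Measure.withDensity_le_smul_withDensity ENNReal.ofReal_ne_top (fun w => ?_) S
  rw [← ENNReal.ofReal_mul (exp_pos ε).le]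
  refine ENNReal.ofReal_le_ofReal ((laplacePDF_le_exp_mul hb.le _ (w - f x')).trans ?_)
  gcongr
  · exact laplacePDF_nonneg hb.le _
  rw [sub_sub_sub_cancel_left, abs_sub_comm, div_le_iff₀ hb, mul_div_cancel₀ _ hε.ne']
  exact hadj

theorem laplace_mechanism_dp
    {X : Type*} (f : X → ℝ) (ε Δf : ℝ) (hε : 0 < ε) (hΔf : 0 < Δf)
    (lap : Measure ℝ)
    (hlap : lap = volume.withDensity fun y : ℝ =>
      ENNReal.ofReal ((1 / (2 * (Δf / ε))) * Real.exp (-|y| / (Δf / ε))))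
    (M : X → Measure ℝ)
    (hM : ∀ x, M x = lap.map fun y => f x + y)
    (x x' : X) (hadj : |f x - f x'| ≤ Δf)
    (S : Set ℝ) (hS : MeasurableSet S) :
    M x S ≤ ENNReal.ofReal (Real.exp ε) * M x' S :=
  laplace_mechanism_dp_general f ε Δf hε hΔf lap hlap M hM x x' hadj S
end
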